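/- arXiv:1504.01557 — 2 statements merged into one kernel-verified Lean document; each statement's English description precedes it below -/
import Mathlib

section
/- Every very weak subgame perfect equilibrium is a weak subgame perfect equilibrium: if a strategy profile in a turn-based multiplayer quantitative game played on a finite directed graph is resistant in every subgame to all profitable one-shot deviations, then it is resistant in every subgame to all profitable finitely deviating strategies. -/
open Classical

noncomputable section

/-- A multiplayer turn-based quantitative game on a directed graph:
`owner` assigns each vertex to a player, `E` is the edge relation (every
vertex has a successor), and `cost i` is player `i`'s cost function on
infinite sequences of vertices (to be minimized), valued in `ℝ ∪ {±∞}`. -/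
structure QGame (P V : Type) where
  owner : V → P
  E : V → V → Prop
  succ_exists : ∀ v, ∃ v', E v v'
  cost : P → (ℕ → V) → EReal

namespace QGame

variable {P V : Type}

/-- An infinite play of the game: consecutive vertices are joined by edges. -/
def IsPlay (G : QGame P V) (ρ : ℕ → V) : Prop := ∀ n, G.E (ρ n) (ρ (n + 1))

/-- Concatenation `hρ` of a finite history `h` with an infinite play `ρ`. -/
def prepend (h : List V) (ρ : ℕ → V) : ℕ → V := fun n =>
  if hn : n < h.length then h.get ⟨n, hn⟩ else ρ (n - h.length)

/-- The prefix of length `n` of a play, as a list. -/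
def playPrefix (ρ : ℕ → V) (n : ℕ) : List V := List.ofFn fun k : Fin n => ρ k

/-- `hv` is a history of the game initialized at `v0`: here `h` is the strict
past and `v` the current vertex; the sequence `h ++ [v]` starts at `v0` and
follows edges. -/
def IsHist (G : QGame P V) (v0 : V) (h : List V) (v : V) : Prop :=
  (h ++ [v]).head? = some v0 ∧ List.Chain' G.E (h ++ [v])

/-- A (turn-based) strategy profile: given the past history and the current
vertex, choose the next vertex.  An individual strategy of player `i` is of
the same type; only its values at vertices owned by `i` matter. -/
abbrev Strat (P V : Type) := List V → V → V

/-- A profile/strategy is valid if it always follows edges. -/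
def Valid (G : QGame P V) (σ : Strat P V) : Prop := ∀ h v, G.E v (σ h v)

/-- History/current-vertex pair produced after `n` steps of `σ` from `v`. -/
def outcomeAux (σ : Strat P V) (v : V) : ℕ → List V × V
  | 0 => ([], v)
  | n + 1 =>
      let p := outcomeAux σ v n
      (p.1 ++ [p.2], σ p.1 p.2)

/-- The outcome play of profile `σ` from initial vertex `v`. -/
def outcome (σ : Strat P V) (v : V) (n : ℕ) : V := (outcomeAux σ v n).2

/-- The profile where player `i` unilaterally deviates to strategy `τ`
from the profile `σ`. -/
def devProf (G : QGame P V) (σ τ : Strat P V) (i : P) : Strat P V :=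
  fun h v => if G.owner v = i then τ h v else σ h v

/-- The set of deviation steps of `τ` from `σ` (for player `i`, from `v`):
positions `n` along the outcome of the deviated profile where the current
vertex belongs to player `i` and `τ` disagrees with `σ`. -/
def devSteps (G : QGame P V) (σ τ : Strat P V) (i : P) (v : V) : Set ℕ :=
  {n | G.owner (outcome (G.devProf σ τ i) v n) = i ∧
       σ (outcomeAux (G.devProf σ τ i) v n).1 (outcome (G.devProf σ τ i) v n) ≠
       τ (outcomeAux (G.devProf σ τ i) v n).1 (outcome (G.devProf σ τ i) v n)}

/-- `τ` is finitely deviating from `σ`. -/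
def FinDev (G : QGame P V) (σ τ : Strat P V) (i : P) (v : V) : Prop :=
  (G.devSteps σ τ i v).Finite

/-- `τ` is one-shot deviating from `σ`: its unique deviation step is at the
initial vertex. -/
def OneShotDev (G : QGame P V) (σ τ : Strat P V) (i : P) (v : V) : Prop :=
  G.devSteps σ τ i v = {0}

/-- Nash equilibrium of the profile `σ` from `v`, with respect to a cost
assignment `c` (no player has a profitable unilateral deviation). -/
def IsNEwith (G : QGame P V) (c : P → (ℕ → V) → EReal) (σ : Strat P V) (v : V) : Prop :=
  ∀ i τ, G.Valid τ →
    c i (outcome σ v) ≤ c i (outcome (G.devProf σ τ i) v)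

/-- Weak Nash equilibrium: no profitable finitely deviating strategy. -/
def IsWeakNEwith (G : QGame P V) (c : P → (ℕ → V) → EReal) (σ : Strat P V) (v : V) : Prop :=
  ∀ i τ, G.Valid τ → G.FinDev σ τ i v →
    c i (outcome σ v) ≤ c i (outcome (G.devProf σ τ i) v)

/-- Very weak Nash equilibrium: no profitable one-shot deviating strategy. -/
def IsVeryWeakNEwith (G : QGame P V) (c : P → (ℕ → V) → EReal) (σ : Strat P V) (v : V) : Prop :=
  ∀ i τ, G.Valid τ → G.OneShotDev σ τ i v →
    c i (outcome σ v) ≤ c i (outcome (G.devProf σ τ i) v)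

/-- The strategy profile induced by `σ` in the subgame after history `h`. -/
def subStrat (σ : Strat P V) (h : List V) : Strat P V := fun g v => σ (h ++ g) v

/-- The cost functions of the subgame after history `h`. -/
def subCost (G : QGame P V) (h : List V) : P → (ℕ → V) → EReal :=
  fun i ρ => G.cost i (prepend h ρ)

/-- Subgame perfect equilibrium: Nash equilibrium in every subgame. -/
def IsSPE (G : QGame P V) (v0 : V) (σ : Strat P V) : Prop :=
  ∀ h v, G.IsHist v0 h v → G.IsNEwith (G.subCost h) (subStrat σ h) v

/-- Weak subgame perfect equilibrium: weak NE in every subgame. -/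
def IsWeakSPE (G : QGame P V) (v0 : V) (σ : Strat P V) : Prop :=
  ∀ h v, G.IsHist v0 h v → G.IsWeakNEwith (G.subCost h) (subStrat σ h) v

/-- Very weak subgame perfect equilibrium: very weak NE in every subgame. -/
def IsVeryWeakSPE (G : QGame P V) (v0 : V) (σ : Strat P V) : Prop :=
  ∀ h v, G.IsHist v0 h v → G.IsVeryWeakNEwith (G.subCost h) (subStrat σ h) v

/-- One elimination step: `ρ` (a potential outcome in the subgame after `h`)
is erased if some player `i` controlling a vertex `ρ n` along `hρ` has an
alternative edge to some `v' ≠ ρ (n+1)` such that every play `ρ'` in the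
current potential set after the extended history gives `i` a strictly
smaller cost than `hρ`. -/
def Eset (G : QGame P V) (Pr : List V → V → Set (ℕ → V)) (h : List V) :
    Set (ℕ → V) :=
  {ρ | ∃ n v', G.E (ρ n) v' ∧ v' ≠ ρ (n + 1) ∧
      ∀ ρ' ∈ Pr (h ++ playPrefix ρ (n + 1)) v',
        G.cost (G.owner (ρ n)) (prepend (h ++ playPrefix ρ (n + 1)) ρ') <
          G.cost (G.owner (ρ n)) (prepend h ρ)}

/-- The transfinite sequence `P_α(hv)` of sets of potential outcomes of weak
Nash equilibria in the subgame `(G|_h, v)`: all plays at stage `0`, removal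
of `E_α` at successors, intersections at limits. -/
def Pset (G : QGame P V) (α : Ordinal) : List V → V → Set (ℕ → V) :=
  Ordinal.limitRecOn (motive := fun _ => List V → V → Set (ℕ → V)) α
    (fun _h v => {ρ | G.IsPlay ρ ∧ ρ 0 = v})
    (fun _ Pr => fun h v => Pr h v \ G.Eset Pr h)
    (fun α _ Pr => fun h v => ⋂ (β : Ordinal) (hβ : β < α), Pr β hβ h v)

/-- A sequence of plays converges to `ρ` (in the product topology on `V^ω`
with `V` discrete) iff every finite prefix of `ρ` is eventually a prefix of
the members of the sequence. -/
def Converges (ρs : ℕ → ℕ → V) (ρ : ℕ → V) : Prop :=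
  ∀ m, ∃ N, ∀ n ≥ N, ∀ k ≤ m, ρs n k = ρ k

/-- Upper semicontinuity of a cost function on plays. -/
def USCcost (G : QGame P V) (c : (ℕ → V) → EReal) : Prop :=
  ∀ (ρs : ℕ → ℕ → V) (ρ : ℕ → V), (∀ n, G.IsPlay (ρs n)) → G.IsPlay ρ →
    Converges ρs ρ →
      Filter.limsup (fun n => c (ρs n)) Filter.atTop ≤ c ρ

/-- A strategy (profile) is finite-memory if it is computed by a Moore
machine: a finite set `M` of memory states, updated while reading the
history, determines the move. -/
def FinMem (σ : Strat P V) : Prop :=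
  ∃ (M : Type) (_ : Finite M) (m0 : M) (upd : M → V → M) (act : M → V → V),
    ∀ h v, σ h v = act (h.foldl upd m0) v

/-- Quantitative reachability cost: the least index at which `ρ` visits the
target set `T`, and `+∞` if `T` is never visited. -/
def reachCost (T : Set V) (ρ : ℕ → V) : EReal :=
  if h : ∃ n, ρ n ∈ T then ((Nat.find h : ℕ) : EReal) else ⊤

/-- `G` is a quantitative reachability game with target sets `T i`. -/
def IsReachGame (G : QGame P V) (T : P → Set V) : Prop :=
  ∀ i ρ, G.cost i ρ = reachCost (T i) ρ

/-- The set of players that have not visited their target set along the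
history `h`. -/
def Iset (T : P → Set V) (h : List V) : Set P := {i | ∀ u ∈ h, u ∉ T i}

end QGame

/-! The one-shot deviation principle, by induction on a bound for the deviation steps of a
finitely deviating strategy `τ`.  If `n` is its last deviation step, let `τ'` agree with `τ`
on histories shorter than `n` and with `σ` afterwards.  Then `τ'` deviates only before `n`,
so by induction it is not profitable.  The outcomes of `τ` and `τ'` share the history reached
at step `n`; from there `τ'` follows `σ`, while `τ` is a one-shot deviation in the
subgame `G|_h`, which is not profitable because `σ` is a very weak SPE. -/

namespace QGame

variable {P V : Type}

section Outcome

variable (σ : Strat P V) (v : V)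

lemma outcomeAux_fst : ∀ n, (outcomeAux σ v n).1 = List.ofFn fun k : Fin n => outcome σ v k
  | 0 => rfl
  | n + 1 => by
      show (outcomeAux σ v n).1 ++ [outcome σ v n] = _
      rw [List.ofFn_succ', List.concat_eq_append, outcomeAux_fst n]
      rfl

lemma length_outcomeAux_fst (n : ℕ) : (outcomeAux σ v n).1.length = n := by
  simp [outcomeAux_fst]

lemma outcomeAux_add (n : ℕ) :
    ∀ k, outcomeAux σ v (n + k) =
      ((outcomeAux σ v n).1 ++
        (outcomeAux (subStrat σ (outcomeAux σ v n).1) (outcome σ v n) k).1,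
       outcome (subStrat σ (outcomeAux σ v n).1) (outcome σ v n) k)
  | 0 => by simp [outcomeAux, outcome]
  | k + 1 => by
      show ((outcomeAux σ v (n + k)).1 ++ [outcome σ v (n + k)],
        σ (outcomeAux σ v (n + k)).1 (outcome σ v (n + k))) = _
      simp only [outcome, outcomeAux_add n k, outcomeAux, subStrat, List.append_assoc]

lemma outcome_add (n k : ℕ) :
    outcome σ v (n + k) = outcome (subStrat σ (outcomeAux σ v n).1) (outcome σ v n) k := by
  rw [outcome, outcomeAux_add]

lemma outcome_eq_prepend (n : ℕ) :
    outcome σ v = prepend (outcomeAux σ v n).1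
      (outcome (subStrat σ (outcomeAux σ v n).1) (outcome σ v n)) := by
  funext m
  by_cases hm : m < n
  · simp [prepend, hm, outcomeAux_fst]
  · obtain ⟨k, rfl⟩ := Nat.exists_eq_add_of_le (not_lt.mp hm)
    simp [prepend, length_outcomeAux_fst, outcome_add]

lemma outcomeAux_congr (σ' : Strat P V) :
    ∀ n, (∀ k < n, σ (outcomeAux σ v k).1 (outcomeAux σ v k).2 =
        σ' (outcomeAux σ v k).1 (outcomeAux σ v k).2) →
      outcomeAux σ v n = outcomeAux σ' v n
  | 0, _ => rfl
  | n + 1, H => by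
      have ih := outcomeAux_congr σ' n fun k hk => H k (Nat.lt_succ_of_lt hk)
      simp only [outcomeAux]
      rw [H n n.lt_succ_self, ih]

end Outcome

lemma prepend_append (a b : List V) (ρ : ℕ → V) :
    prepend (a ++ b) ρ = prepend a (prepend b ρ) := by
  funext n
  simp only [prepend, List.length_append, List.get_eq_getElem]
  by_cases h1 : n < a.length
  · rw [dif_pos (by omega), dif_pos h1, List.getElem_append_left h1]
  · rw [dif_neg h1]
    by_cases h2 : n < a.length + b.length
    · rw [dif_pos h2, dif_pos (by omega), List.getElem_append_right (by omega)]
    · rw [dif_neg h2, dif_neg (by omega), Nat.sub_add_eq]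

lemma subStrat_subStrat (σ : Strat P V) (h g : List V) :
    subStrat (subStrat σ h) g = subStrat σ (h ++ g) := by
  funext g' u
  simp [subStrat]

lemma subStrat_devProf (G : QGame P V) (σ τ : Strat P V) (i : P) (h : List V) :
    subStrat (G.devProf σ τ i) h = G.devProf (subStrat σ h) (subStrat τ h) i :=
  rfl

lemma subCost_outcome {G : QGame P V} {σ : Strat P V} {h : List V} {i : P} {v : V} (n : ℕ) :
    G.subCost h i (outcome σ v) =
      G.subCost (h ++ (outcomeAux σ v n).1) i
        (outcome (subStrat σ (outcomeAux σ v n).1) (outcome σ v n)) := by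
  rw [subCost, subCost, prepend_append, ← outcome_eq_prepend]

section Validity

variable {G : QGame P V} {σ τ : Strat P V}

lemma Valid.subStrat (hσ : G.Valid σ) (h : List V) : G.Valid (subStrat σ h) :=
  fun g u => hσ (h ++ g) u

lemma Valid.devProf (hσ : G.Valid σ) (hτ : G.Valid τ) (i : P) :
    G.Valid (G.devProf σ τ i) := by
  intro g u
  by_cases hu : G.owner u = i <;> simp [QGame.devProf, hu, hσ g u, hτ g u]

lemma IsHist.snoc {v0 v u : V} {h : List V} (hh : G.IsHist v0 h v) (hvu : G.E v u) :
    G.IsHist v0 (h ++ [v]) u := by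
  obtain ⟨hhead, hchain⟩ := hh
  refine ⟨by rw [List.head?_append_of_ne_nil _ (by simp), hhead],
    List.isChain_append.2 ⟨hchain, List.isChain_singleton u, ?_⟩⟩
  simp [hvu]

lemma IsHist.outcomeAux {v0 v : V} {h : List V} (hσ : G.Valid σ) (hh : G.IsHist v0 h v) :
    ∀ n, G.IsHist v0 (h ++ (outcomeAux σ v n).1) (outcome σ v n)
  | 0 => by simpa [QGame.outcomeAux, outcome] using hh
  | n + 1 => by
      simpa [QGame.outcomeAux, outcome] using (hh.outcomeAux hσ n).snoc (hσ _ _)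

end Validity

section Deviation

variable {G : QGame P V} {σ τ : Strat P V} {i : P} {v : V}

lemma devSteps_subStrat_outcomeAux (n : ℕ) :
    G.devSteps (subStrat σ (outcomeAux (G.devProf σ τ i) v n).1)
        (subStrat τ (outcomeAux (G.devProf σ τ i) v n).1) i
        (outcome (G.devProf σ τ i) v n) =
      {k | n + k ∈ G.devSteps σ τ i v} := by
  ext k
  simp only [devSteps, Set.mem_ofPred_eq, ← subStrat_devProf, outcomeAux_add, outcome_add]
  rfl

lemma outcome_devProf_of_devSteps_eq_empty (h : G.devSteps σ τ i v = ∅) :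
    outcome (G.devProf σ τ i) v = outcome σ v := by
  funext n
  rw [outcome, outcome, outcomeAux_congr _ _ σ n]
  intro k _
  have hk : k ∉ G.devSteps σ τ i v := h ▸ Set.notMem_empty k
  simp only [devSteps, Set.mem_ofPred_eq, not_and, not_not] at hk
  simp only [devProf]
  split_ifs with ho
  · exact (hk ho).symm
  · rfl

def truncate (τ σ : Strat P V) (n : ℕ) : Strat P V :=
  fun g u => if g.length < n then τ g u else σ g u

lemma Valid.truncate (hτ : G.Valid τ) (hσ : G.Valid σ) (n : ℕ) :
    G.Valid (truncate τ σ n) := by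
  intro g u
  by_cases hg : g.length < n <;> simp [QGame.truncate, hg, hτ g u, hσ g u]

variable {n : ℕ}

lemma outcomeAux_devProf_truncate {k : ℕ} (hk : k ≤ n) :
    outcomeAux (G.devProf σ (truncate τ σ n) i) v k = outcomeAux (G.devProf σ τ i) v k :=
  outcomeAux_congr _ _ _ k fun j hj => by
    simp [devProf, truncate, length_outcomeAux_fst, show j < n by omega]

lemma devSteps_truncate :
    G.devSteps σ (truncate τ σ n) i v = {k ∈ G.devSteps σ τ i v | k < n} := by
  ext k
  by_cases hk : k < n
  · simp [devSteps, outcome, outcomeAux_devProf_truncate hk.le, truncate,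
      length_outcomeAux_fst, hk]
  · simp [devSteps, truncate, length_outcomeAux_fst, hk]

lemma subStrat_devProf_truncate {pre : List V} (hpre : n ≤ pre.length) :
    subStrat (G.devProf σ (truncate τ σ n) i) pre = subStrat σ pre := by
  funext g u
  simp [subStrat, devProf, truncate, show ¬ pre.length + g.length < n by omega]

end Deviation

section OneShotDeviationPrinciple

variable {G : QGame P V} {v0 : V} {σ : Strat P V}

lemma IsVeryWeakSPE.subCost_truncate_le {v : V} {τ : Strat P V} {h : List V} {i : P} {n : ℕ}
    (hvw : G.IsVeryWeakSPE v0 σ) (hσ : G.Valid σ) (hτ : G.Valid τ) (hh : G.IsHist v0 h v)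
    (hn : n ∈ G.devSteps (subStrat σ h) τ i v)
    (hlast : ∀ k ∈ G.devSteps (subStrat σ h) τ i v, k ≤ n) :
    G.subCost h i (outcome (G.devProf (subStrat σ h) (truncate τ (subStrat σ h) n) i) v) ≤
      G.subCost h i (outcome (G.devProf (subStrat σ h) τ i) v) := by
  set D := G.devProf (subStrat σ h) τ i
  set pre := (outcomeAux D v n).1
  have hist : G.IsHist v0 (h ++ pre) (outcome D v n) :=
    hh.outcomeAux ((hσ.subStrat h).devProf hτ i) n
  have oneShot : G.OneShotDev (subStrat σ (h ++ pre)) (subStrat τ pre) i (outcome D v n) := by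
    rw [OneShotDev, ← subStrat_subStrat, devSteps_subStrat_outcomeAux]
    ext k
    simp only [Set.mem_ofPred_eq, Set.mem_singleton_iff]
    exact ⟨fun hk => by have := hlast _ hk; omega, by rintro rfl; simpa using hn⟩
  calc G.subCost h i (outcome (G.devProf (subStrat σ h) (truncate τ (subStrat σ h) n) i) v)
      = G.subCost (h ++ pre) i (outcome (subStrat σ (h ++ pre)) (outcome D v n)) := by
        rw [subCost_outcome n, outcome, outcomeAux_devProf_truncate le_rfl,
          subStrat_devProf_truncate (length_outcomeAux_fst _ _ _).ge, subStrat_subStrat]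
        rfl
    _ ≤ G.subCost (h ++ pre) i
          (outcome (G.devProf (subStrat σ (h ++ pre)) (subStrat τ pre) i) (outcome D v n)) :=
        hvw _ _ hist i _ (hτ.subStrat pre) oneShot
    _ = G.subCost h i (outcome D v) := by
        rw [subCost_outcome (σ := D) n, subStrat_devProf, subStrat_subStrat]

lemma IsVeryWeakSPE.subCost_le_of_devSteps_subset_Iio {v : V} {h : List V} {i : P}
    (hvw : G.IsVeryWeakSPE v0 σ) (hσ : G.Valid σ) (hh : G.IsHist v0 h v) :
    ∀ (N : ℕ) (τ : Strat P V), G.Valid τ →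
      G.devSteps (subStrat σ h) τ i v ⊆ Set.Iio N →
      G.subCost h i (outcome (subStrat σ h) v) ≤
        G.subCost h i (outcome (G.devProf (subStrat σ h) τ i) v)
  | 0, τ, _, hD => by
      rw [outcome_devProf_of_devSteps_eq_empty (Set.subset_empty_iff.mp (by simpa using hD))]
  | N + 1, τ, hτ, hD => by
      have hle : ∀ k ∈ G.devSteps (subStrat σ h) τ i v, k ≤ N :=
        fun k hk => Nat.lt_succ_iff.mp (hD hk)
      by_cases hN : N ∈ G.devSteps (subStrat σ h) τ i v
      · calc _ ≤ G.subCost h i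
                (outcome (G.devProf (subStrat σ h) (truncate τ (subStrat σ h) N) i) v) :=
              hvw.subCost_le_of_devSteps_subset_Iio hσ hh N _ (hτ.truncate (hσ.subStrat h) N)
                (by rw [devSteps_truncate]; exact fun k hk => hk.2)
          _ ≤ _ := hvw.subCost_truncate_le hσ hτ hh hN hle
      · exact hvw.subCost_le_of_devSteps_subset_Iio hσ hh N τ hτ fun k hk =>
          lt_of_le_of_ne (hle k hk) (ne_of_mem_of_not_mem hk hN)

end OneShotDeviationPrinciple

end QGame

open QGame in
theorem veryWeakSPE_is_weakSPE_general {P V : Type}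
    (G : QGame P V) (v0 : V) (σ : Strat P V) (hσ : G.Valid σ)
    (hvw : G.IsVeryWeakSPE v0 σ) : G.IsWeakSPE v0 σ := by
  intro h v hh i τ hτ hfin
  obtain ⟨N, hN⟩ := hfin.bddAbove
  exact hvw.subCost_le_of_devSteps_subset_Iio hσ hh (N + 1) τ hτ
    fun k hk => Nat.lt_succ_of_le (hN hk)

open QGame in
/-- Every very weak subgame perfect equilibrium is a weak
subgame perfect equilibrium: if a strategy profile of a turn-based
multiplayer quantitative game on a finite directed graph is, in every
subgame, resistant to all profitable one-shot deviations, then in every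
subgame it is resistant to all profitable finitely deviating strategies. -/
theorem veryWeakSPE_is_weakSPE {P V : Type} [Finite P] [Finite V]
    (G : QGame P V) (v0 : V) (σ : Strat P V) (hσ : G.Valid σ)
    (hvw : G.IsVeryWeakSPE v0 σ) : G.IsWeakSPE v0 σ :=
  veryWeakSPE_is_weakSPE_general G v0 σ hσ hvw
end
end

section
/- For upper-semicontinuous cost functions, the two transfinite hierarchies coincide at their fixpoints: P'_{β*}(hv) = P_{α*}(hv) for every history hv, where P_α is the hierarchy for weak SPE outcomes and P'_α the hierarchy for SPE outcomes (which removes a play ρ whenever some player can beat it against every play of a set D_α^{H,i}(h'v') of plays with maximal (H,i)-decompositions, for some set H of deviation histories). -/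
open Classical

noncomputable section

namespace QGame

variable {P V : Type}

/-- `ρ'` (whose prepended word is `w`) has a deviation step at position `q`
from a play of `Pr` starting at position `p`: some `ρ₁` in the current
potential set at position `p` agrees with `w` strictly before `q` and
differs from `w` exactly at `q`. -/
def DevStepAt (Pr : List V → V → Set (ℕ → V)) (w : ℕ → V) (p q : ℕ) : Prop :=
  p < q ∧ ∃ ρ₁ ∈ Pr (playPrefix w p) (w p),
    (∀ k, p + k < q → ρ₁ k = w (p + k)) ∧ ρ₁ (q - p) ≠ w q

/-- An infinite `(H, i)`-decomposition of the play `ρ'` of the subgame after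
`h'`, recorded by the strictly increasing sequence `p` of cut positions in
the word `w = h'ρ'` (with `p 0` the position of the first vertex of `ρ'`):
every block ends in a vertex of player `i`, and every later cut is a
deviation step, at a history belonging to `H`, from some play of the current
potential set at the previous cut. -/
def InfDecomp (G : QGame P V) (Pr : List V → V → Set (ℕ → V)) (i : P)
    (H : Set (List V × V)) (h' : List V) (ρ' : ℕ → V) (p : ℕ → ℕ) : Prop :=
  p 0 = h'.length ∧ StrictMono p ∧
  (∀ n, G.owner (prepend h' ρ' (p (n + 1) - 1)) = i) ∧
  (∀ n, (playPrefix (prepend h' ρ') (p (n + 1)), prepend h' ρ' (p (n + 1))) ∈ H) ∧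
  (∀ n, DevStepAt Pr (prepend h' ρ') (p n) (p (n + 1)))

/-- A finite `(H, i)`-decomposition of `ρ'` with `m` deviation steps, given
by cut positions `p 0 < ⋯ < p m`; the final tail of `ρ'` from position `p m`
belongs to the current potential set there. -/
def FinDecomp (G : QGame P V) (Pr : List V → V → Set (ℕ → V)) (i : P)
    (H : Set (List V × V)) (h' : List V) (ρ' : ℕ → V) (m : ℕ) (p : ℕ → ℕ) : Prop :=
  p 0 = h'.length ∧ (∀ n < m, p n < p (n + 1)) ∧
  (∀ n < m, G.owner (prepend h' ρ' (p (n + 1) - 1)) = i) ∧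
  (∀ n < m, (playPrefix (prepend h' ρ') (p (n + 1)), prepend h' ρ' (p (n + 1))) ∈ H) ∧
  (∀ n < m, DevStepAt Pr (prepend h' ρ') (p n) (p (n + 1))) ∧
  (fun k => prepend h' ρ' (p m + k)) ∈
    Pr (playPrefix (prepend h' ρ') (p m)) (prepend h' ρ' (p m))

/-- The set `D_α^{H,i}(h'v')` of plays admitting a *maximal*
`(H, i)`-decomposition: either an infinite decomposition, or a finite one
with `m` deviation steps that cannot be strictly prolonged, i.e. there is no
play `ρ''` with an `(H, i)`-decomposition whose first `m` cuts agree with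
those of `ρ'` and which branches off from `ρ'` exactly at its `(m+1)`-st cut. -/
def Dset (G : QGame P V) (Pr : List V → V → Set (ℕ → V)) (H : Set (List V × V))
    (i : P) (h' : List V) (v' : V) : Set (ℕ → V) :=
  {ρ' | ρ' 0 = v' ∧ G.IsPlay ρ' ∧
    ((∃ p, G.InfDecomp Pr i H h' ρ' p) ∨
      (∃ m p, G.FinDecomp Pr i H h' ρ' m p ∧
        ¬ ∃ (ρ'' : ℕ → V) (q : ℕ → ℕ), ρ'' 0 = v' ∧ G.IsPlay ρ'' ∧
          (G.InfDecomp Pr i H h' ρ'' q ∨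
            ∃ m', m < m' ∧ G.FinDecomp Pr i H h' ρ'' m' q) ∧
          (∀ n ≤ m, q n = p n) ∧
          (∀ k < q (m + 1), prepend h' ρ'' k = prepend h' ρ' k) ∧
          prepend h' ρ'' (q (m + 1)) ≠ prepend h' ρ' (q (m + 1))))}

/-- The set `𝐇(h'v')` of histories strictly extending the history `h'v'`
(pairs of a strict past and a current vertex). -/
def Hset (h' : List V) (v' : V) : Set (List V × V) :=
  {gu | (h' ++ [v']) <+: (gu.1 ++ [gu.2]) ∧
        (h' ++ [v']).length < (gu.1 ++ [gu.2]).length}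

/-- One elimination step of the hierarchy for SPEs: `ρ` is erased if some
player `i` controlling a vertex `ρ n` along `hρ` has an alternative edge to
`v' ≠ ρ (n+1)` and a set `H` of deviation histories such that `i` pays
strictly less than `λ_i(hρ)` against *every* play of `D^{H,i}(h'v')`. -/
def E'set (G : QGame P V) (Pr : List V → V → Set (ℕ → V)) (h : List V) :
    Set (ℕ → V) :=
  {ρ | ∃ n, ∃ v', ∃ H : Set (List V × V), G.E (ρ n) v' ∧ v' ≠ ρ (n + 1) ∧
      H ⊆ Hset (h ++ playPrefix ρ (n + 1)) v' ∧
      ∀ ρ' ∈ G.Dset Pr H (G.owner (ρ n)) (h ++ playPrefix ρ (n + 1)) v',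
        G.cost (G.owner (ρ n)) (prepend (h ++ playPrefix ρ (n + 1)) ρ') <
          G.cost (G.owner (ρ n)) (prepend h ρ)}

/-- The transfinite hierarchy `P'_α(hv)` of sets of potential outcomes of
SPEs. -/
def P'set (G : QGame P V) (α : Ordinal) : List V → V → Set (ℕ → V) :=
  Ordinal.limitRecOn (motive := fun _ => List V → V → Set (ℕ → V)) α
    (fun _h v => {ρ | G.IsPlay ρ ∧ ρ 0 = v})
    (fun _ Pr => fun h v => Pr h v \ G.E'set Pr h)
    (fun α _ Pr => fun h v => ⋂ (β : Ordinal) (hβ : β < α), Pr β hβ h v)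

end QGame

/-!
Each inclusion places a fixpoint inside every stage `γ` of the other hierarchy, by induction on
`γ`, using only that a fixpoint eliminates nothing from itself.

`P'_{β*} ⊆ P_γ`: an elimination of `ρ` by `E(P_γ)` would also be an elimination by
`E'(P'_{β*})` with `H = ∅`, because `D^{∅,i}(h'v') = P'_{β*}(h'v') ⊆ P_γ(h'v')`.

`P_{α*} ⊆ P'_γ`: suppose `ρ ∈ P_{α*}(hv)` is eliminated by `E'(P'_γ)` through player `i`, exit
`h'v'` and histories `H`, so that every play of `D^{H,i}(h'v')` costs `i` less than
`c = λ_i(hρ)`. As `ρ` survives `E(P_{α*})`, some `ρ₀ ∈ P_{α*}(h'v')` costs at least `c`. A play of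
cost at least `c` with a finite decomposition whose last tail lies in `P_{α*}` is then not in `D`,
so its decomposition is not maximal: it can branch off after its last cut at a vertex of `i`,
towards a history of `H`. Since the tail survives `E(P_{α*})`, the branch can be continued by a
play of `P_{α*}` without lowering the cost, which gives a decomposition with one more cut. The
limit of these prolongations is a play with an infinite decomposition, hence in `D`, and by upper
semicontinuity it still costs at least `c`: a contradiction.
-/

namespace QGame

variable {P V : Type}

section Words

@[simp] lemma playPrefix_length (ρ : ℕ → V) (n : ℕ) : (playPrefix ρ n).length = n := by
  simp [playPrefix]

@[simp] lemma getElem_playPrefix (ρ : ℕ → V) (n k : ℕ) (hk : k < (playPrefix ρ n).length) :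
    (playPrefix ρ n)[k] = ρ k := by
  simp [playPrefix]

lemma prepend_of_lt {h : List V} (ρ : ℕ → V) {n : ℕ} (hn : n < h.length) :
    prepend h ρ n = h[n] := by
  simp [prepend, hn]

lemma prepend_of_le (h : List V) (ρ : ℕ → V) {n : ℕ} (hn : h.length ≤ n) :
    prepend h ρ n = ρ (n - h.length) := by
  simp [prepend, Nat.not_lt.mpr hn]

@[simp] lemma prepend_length_add (h : List V) (ρ : ℕ → V) (k : ℕ) :
    prepend h ρ (h.length + k) = ρ k := by
  simp [prepend_of_le]

@[simp] lemma prepend_length (h : List V) (ρ : ℕ → V) : prepend h ρ h.length = ρ 0 := by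
  simpa using prepend_length_add h ρ 0

lemma playPrefix_congr {w w' : ℕ → V} {n : ℕ} (h : ∀ k < n, w k = w' k) :
    playPrefix w n = playPrefix w' n :=
  List.ext_getElem (by simp) fun k hk _ => by simpa using h k (by simpa using hk)

@[simp] lemma playPrefix_prepend (h : List V) (ρ : ℕ → V) :
    playPrefix (prepend h ρ) h.length = h :=
  List.ext_getElem (by simp) fun k hk _ => by
    rw [getElem_playPrefix, prepend_of_lt _ (by simpa using hk)]

lemma prepend_shift {h : List V} {w : ℕ → V} (hw : playPrefix w h.length = h) :
    prepend h (fun m => w (h.length + m)) = w := by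
  funext n
  rcases lt_or_ge n h.length with hn | hn
  · rw [prepend_of_lt _ hn, ← List.getElem_of_eq hw (by simpa using hn), getElem_playPrefix]
  · rw [prepend_of_le _ _ hn, Nat.add_sub_cancel' hn]

lemma prepend_playPrefix_shift (w : ℕ → V) (p : ℕ) :
    prepend (playPrefix w p) (fun m => w (p + m)) = w := by
  simpa using prepend_shift (w := w) (h := playPrefix w p) (by simp)

lemma shift_prepend (h : List V) (ρ : ℕ → V) :
    (fun m => prepend h ρ (h.length + m)) = ρ := by
  simp

lemma playPrefix_succ (w : ℕ → V) (p : ℕ) :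
    playPrefix w (p + 1) = playPrefix w p ++ [w p] := by
  simp only [playPrefix, List.ofFn_succ_last]
  rfl

lemma playPrefix_append_playPrefix_shift (w : ℕ → V) (p m : ℕ) :
    playPrefix w p ++ playPrefix (fun k => w (p + k)) m = playPrefix w (p + m) := by
  induction m with
  | zero => simp [playPrefix]
  | succ m ih => rw [playPrefix_succ, ← Nat.add_assoc, playPrefix_succ, ← ih, List.append_assoc]

lemma append_playPrefix (h : List V) (ρ : ℕ → V) (n : ℕ) :
    h ++ playPrefix ρ n = playPrefix (prepend h ρ) (h.length + n) := by
  simpa using playPrefix_append_playPrefix_shift (prepend h ρ) h.length n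

@[simp] lemma prepend_playPrefix_of_lt (w τ : ℕ → V) {m n : ℕ} (hm : m < n) :
    prepend (playPrefix w n) τ m = w m := by
  simp [prepend_of_lt τ (by simpa using hm : m < (playPrefix w n).length)]

@[simp] lemma prepend_playPrefix_self (w τ : ℕ → V) (n : ℕ) :
    prepend (playPrefix w n) τ n = τ 0 := by
  simpa using prepend_length (playPrefix w n) τ

@[simp] lemma playPrefix_prepend_playPrefix (w τ : ℕ → V) (n : ℕ) :
    playPrefix (prepend (playPrefix w n) τ) n = playPrefix w n := by
  simpa using playPrefix_prepend (playPrefix w n) τ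

lemma shift_prepend_playPrefix (w τ : ℕ → V) (n : ℕ) :
    (fun m => prepend (playPrefix w n) τ (n + m)) = τ := by
  simpa using shift_prepend (playPrefix w n) τ

lemma prepend_diag (h : List V) (ρs : ℕ → ℕ → V) :
    prepend h (fun m => ρs (h.length + m) m) = fun n => prepend h (ρs n) n := by
  funext n
  rcases lt_or_ge n h.length with hn | hn
  · simp [prepend_of_lt _ hn]
  · simp [prepend_of_le _ _ hn, Nat.add_sub_cancel' hn]

end Words

section Plays

variable (G : QGame P V)

lemma isPlay_shift {w : ℕ → V} (hw : G.IsPlay w) (p : ℕ) : G.IsPlay fun m => w (p + m) :=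
  fun n => by simpa [Nat.add_assoc] using hw (p + n)

lemma isChain_playPrefix {w : ℕ → V} (hw : G.IsPlay w) (p : ℕ) :
    List.IsChain G.E (playPrefix w p) := by
  rw [List.isChain_iff_getElem]
  intro k hk
  simpa using hw k

lemma isHist_playPrefix_of_edge {v0 u : V} {w : ℕ → V} (hw : G.IsPlay w) (h0 : w 0 = v0)
    (q : ℕ) (he : G.E (w q) u) : G.IsHist v0 (playPrefix w (q + 1)) u := by
  refine ⟨by simp [playPrefix, List.ofFn_succ, h0], ?_⟩
  rw [List.Chain', List.isChain_append]
  refine ⟨G.isChain_playPrefix hw _, List.isChain_singleton _, ?_⟩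
  rw [playPrefix_succ]
  simpa using he

lemma isHist_playPrefix {v0 : V} {w : ℕ → V} (hw : G.IsPlay w) (h0 : w 0 = v0) (p : ℕ) :
    G.IsHist v0 (playPrefix w p) (w p) := by
  cases p with
  | zero => exact ⟨by simp [playPrefix, h0], List.isChain_singleton _⟩
  | succ q => exact G.isHist_playPrefix_of_edge hw h0 q (hw q)

lemma isPlay_prepend {v0 v : V} {h : List V} {ρ : ℕ → V} (hist : G.IsHist v0 h v)
    (hρ : G.IsPlay ρ) (h0 : ρ 0 = v) : G.IsPlay (prepend h ρ) := by
  have hchain := hist.2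
  rw [List.Chain', List.isChain_iff_getElem] at hchain
  intro n
  rcases lt_or_ge (n + 1) h.length with hn | hn
  · rw [prepend_of_lt _ (by omega), prepend_of_lt _ hn]
    simpa [List.getElem_append, hn, Nat.lt_of_succ_lt hn] using hchain n (by simp; omega)
  rcases lt_or_ge n h.length with hn' | hn'
  · have hlen : n + 1 = h.length := by omega
    rw [prepend_of_lt _ hn', hlen, prepend_length, h0]
    simpa [List.getElem_append, hn', hlen] using hchain n (by simp; omega)
  · rw [prepend_of_le _ _ hn', prepend_of_le _ _ hn, Nat.sub_add_comm hn']
    exact hρ _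

lemma prepend_zero {v0 v : V} {h : List V} {ρ : ℕ → V} (hist : G.IsHist v0 h v)
    (h0 : ρ 0 = v) : prepend h ρ 0 = v0 := by
  have hhead := hist.1
  cases h with
  | nil => simpa [prepend, h0] using hhead
  | cons a t => simpa [prepend] using hhead

lemma isHist_append_playPrefix {v0 v u : V} {h : List V} {ρ : ℕ → V} (hist : G.IsHist v0 h v)
    (hρ : G.IsPlay ρ) (h0 : ρ 0 = v) {n : ℕ} (he : G.E (ρ n) u) :
    G.IsHist v0 (h ++ playPrefix ρ (n + 1)) u := by
  rw [append_playPrefix, ← Nat.add_assoc]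
  exact G.isHist_playPrefix_of_edge (G.isPlay_prepend hist hρ h0) (G.prepend_zero hist h0) _
    (by simpa using he)

lemma isPlay_of_converges {ρs : ℕ → ℕ → V} {ρ : ℕ → V} (hρs : ∀ n, G.IsPlay (ρs n))
    (hconv : Converges ρs ρ) : G.IsPlay ρ := by
  intro m
  obtain ⟨N, hN⟩ := hconv (m + 1)
  rw [← hN N le_rfl m (by omega), ← hN N le_rfl (m + 1) le_rfl]
  exact hρs N m

end Plays

section Sequences

theorem exists_seq_of_exists_succ {X : Type*} {Q : ℕ → X → Prop} {R : ℕ → X → X → Prop}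
    (h0 : ∃ x, Q 0 x) (hstep : ∀ k x, Q k x → ∃ y, Q (k + 1) y ∧ R k x y) :
    ∃ f : ℕ → X, ∀ k, Q k (f k) ∧ R k (f k) (f (k + 1)) := by
  obtain ⟨x0, hx0⟩ := h0
  choose next hnext hR using hstep
  let s : (k : ℕ) → {x // Q k x} :=
    Nat.rec ⟨x0, hx0⟩ fun k x => ⟨next k x.1 x.2, hnext k x.1 x.2⟩
  exact ⟨fun k => (s k).1, fun k => ⟨(s k).2, hR k _ (s k).2⟩⟩

variable {X : Type} {ws : ℕ → ℕ → X} {N : ℕ → ℕ}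

lemma eq_of_forall_eq_succ_below (hN : Monotone N) (h : ∀ k, ∀ m < N k, ws (k + 1) m = ws k m)
    {k l m : ℕ} (hkl : k ≤ l) (hm : m < N k) : ws l m = ws k m := by
  induction l, hkl using Nat.le_induction with
  | base => rfl
  | succ l hkl ih => rw [h l m (hm.trans_le (hN hkl)), ih]

lemma diag_eq_of_forall_eq_succ_below (hN : Monotone N) (hid : ∀ k, k < N k)
    (h : ∀ k, ∀ m < N k, ws (k + 1) m = ws k m) {k m : ℕ} (hm : m < N k) : ws m m = ws k m := by
  rcases le_total m k with hmk | hkm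
  · exact (eq_of_forall_eq_succ_below hN h hmk (hid m)).symm
  · exact eq_of_forall_eq_succ_below hN h hkm hm

lemma converges_diag (hN : Monotone N) (hid : ∀ k, k < N k)
    (h : ∀ k, ∀ m < N k, ws (k + 1) m = ws k m) : Converges ws fun m => ws m m :=
  fun m => ⟨m, fun n hn _ hk =>
    (diag_eq_of_forall_eq_succ_below hN hid h ((hk.trans hn).trans_lt (hid n))).symm⟩

end Sequences

section Hierarchy

def hierarchy (init : List V → V → Set (ℕ → V))
    (E : (List V → V → Set (ℕ → V)) → List V → Set (ℕ → V)) (α : Ordinal) :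
    List V → V → Set (ℕ → V) :=
  Ordinal.limitRecOn (motive := fun _ => List V → V → Set (ℕ → V)) α init
    (fun _ Pr h v => Pr h v \ E Pr h)
    (fun α _ Pr h v => ⋂ (β : Ordinal) (hβ : β < α), Pr β hβ h v)

lemma Pset_eq_hierarchy (G : QGame P V) :
    G.Pset = hierarchy (fun _ v => {ρ | G.IsPlay ρ ∧ ρ 0 = v}) G.Eset :=
  rfl

lemma P'set_eq_hierarchy (G : QGame P V) :
    G.P'set = hierarchy (fun _ v => {ρ | G.IsPlay ρ ∧ ρ 0 = v}) G.E'set :=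
  rfl

variable {init : List V → V → Set (ℕ → V)}
  {E : (List V → V → Set (ℕ → V)) → List V → Set (ℕ → V)}

lemma hierarchy_add_one (α : Ordinal) :
    hierarchy init E (α + 1) = fun h v => hierarchy init E α h v \ E (hierarchy init E α) h :=
  Ordinal.limitRecOn_add_one ..

lemma hierarchy_subset_init (α : Ordinal) (h : List V) (v : V) :
    hierarchy init E α h v ⊆ init h v := by
  induction α using Ordinal.limitRecOn with
  | zero => rw [hierarchy, Ordinal.limitRecOn_zero]
  | add_one α ih => rw [hierarchy_add_one]; exact Set.sdiff_subset.trans ih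
  | limit α hα ih =>
    rw [hierarchy, Ordinal.limitRecOn_limit _ _ _ _ hα]
    exact fun ρ hρ => ih 0 hα.bot_lt (Set.mem_iInter₂.1 hρ 0 hα.bot_lt)

lemma notMem_of_hierarchy_eq_add_one {α : Ordinal} {h : List V} {v : V}
    (hfix : hierarchy init E α h v = hierarchy init E (α + 1) h v) {ρ : ℕ → V}
    (hρ : ρ ∈ hierarchy init E α h v) : ρ ∉ E (hierarchy init E α) h := by
  rw [hfix, hierarchy_add_one] at hρ
  exact hρ.2

lemma subset_hierarchy {X : List V → V → Prop} {S : List V → V → Set (ℕ → V)}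
    (hinit : ∀ h v, X h v → S h v ⊆ init h v)
    (hE : ∀ Pr : List V → V → Set (ℕ → V), (∀ h v, X h v → S h v ⊆ Pr h v) →
      ∀ h v, X h v → ∀ ρ ∈ S h v, ρ ∉ E Pr h)
    (α : Ordinal) : ∀ h v, X h v → S h v ⊆ hierarchy init E α h v := by
  induction α using Ordinal.limitRecOn with
  | zero => rw [hierarchy, Ordinal.limitRecOn_zero]; exact hinit
  | add_one α ih =>
    rw [hierarchy_add_one]
    exact fun h v hX ρ hρ => ⟨ih h v hX hρ, hE _ ih h v hX ρ hρ⟩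
  | limit α hα ih =>
    rw [hierarchy, Ordinal.limitRecOn_limit _ _ _ _ hα]
    exact fun h v hX ρ hρ => Set.mem_iInter₂.2 fun β hβ => ih β hβ h v hX hρ

end Hierarchy

section Decompositions

lemma le_of_forall_lt_succ {α : Type*} [Preorder α] {p : ℕ → α} {k : ℕ}
    (h : ∀ n < k, p n < p (n + 1)) {j : ℕ} (hj : j ≤ k) : p j ≤ p k := by
  induction k, hj using Nat.le_induction with
  | base => exact le_rfl
  | succ k hjk ih => exact (ih fun n hn => h n (by omega)).trans (h k (by omega)).le

variable {Pr Pr' : List V → V → Set (ℕ → V)} {w w' : ℕ → V} {p q : ℕ}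

lemma DevStepAt.congr (hw : ∀ m ≤ q, w m = w' m) (hdev : DevStepAt Pr w p q) :
    DevStepAt Pr w' p q := by
  obtain ⟨hpq, ρ₁, hρ₁, hagree, hne⟩ := hdev
  refine ⟨hpq, ρ₁, ?_, fun k hk => (hagree k hk).trans (hw _ (by omega)), hw q le_rfl ▸ hne⟩
  rwa [← playPrefix_congr fun k hk => hw k (by omega), ← hw p (by omega)]

lemma DevStepAt.mono (hsub : Pr (playPrefix w p) (w p) ⊆ Pr' (playPrefix w p) (w p))
    (hdev : DevStepAt Pr w p q) : DevStepAt Pr' w p q :=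
  let ⟨hpq, ρ₁, hρ₁, hagree, hne⟩ := hdev
  ⟨hpq, ρ₁, hsub hρ₁, hagree, hne⟩

lemma devStepAt_succ_of_shift_mem (hpq : p ≤ q)
    (hshift : (fun m => w (p + m)) ∈ Pr (playPrefix w p) (w p)) (hw : ∀ m ≤ q, w' m = w m)
    (hne : w' (q + 1) ≠ w (q + 1)) : DevStepAt Pr w' p (q + 1) := by
  refine ⟨by omega, _, ?_, fun k hk => (hw _ (by omega)).symm, ?_⟩
  · rwa [playPrefix_congr fun k hk => hw k (by omega), hw p hpq]
  · rw [Nat.add_sub_cancel' (by omega)]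
    exact hne.symm

variable {G : QGame P V} {i : P} {H : Set (List V × V)}

/-- A block of an `(H, i)`-decomposition of the word `w`, between consecutive cuts `p` and `q`. -/
def IsBlock (G : QGame P V) (Pr : List V → V → Set (ℕ → V)) (i : P) (H : Set (List V × V))
    (w : ℕ → V) (p q : ℕ) : Prop :=
  G.owner (w (q - 1)) = i ∧ (playPrefix w q, w q) ∈ H ∧ DevStepAt Pr w p q

lemma IsBlock.lt (hb : G.IsBlock Pr i H w p q) : p < q :=
  hb.2.2.1

lemma IsBlock.congr (hw : ∀ m ≤ q, w m = w' m) (hb : G.IsBlock Pr i H w p q) :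
    G.IsBlock Pr i H w' p q := by
  obtain ⟨hown, hH, hdev⟩ := hb
  refine ⟨hw _ (Nat.sub_le q 1) ▸ hown, ?_, hdev.congr hw⟩
  rwa [← playPrefix_congr fun k hk => hw k hk.le, ← hw q le_rfl]

lemma IsBlock.mono (hsub : Pr (playPrefix w p) (w p) ⊆ Pr' (playPrefix w p) (w p))
    (hb : G.IsBlock Pr i H w p q) : G.IsBlock Pr' i H w p q :=
  ⟨hb.1, hb.2.1, hb.2.2.mono hsub⟩

variable {h' : List V} {ρ' ρ'' : ℕ → V} {k : ℕ} {cut : ℕ → ℕ}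

lemma finDecomp_iff : G.FinDecomp Pr i H h' ρ' k cut ↔
    cut 0 = h'.length ∧ (∀ n < k, G.IsBlock Pr i H (prepend h' ρ') (cut n) (cut (n + 1))) ∧
      (fun m => prepend h' ρ' (cut k + m)) ∈
        Pr (playPrefix (prepend h' ρ') (cut k)) (prepend h' ρ' (cut k)) :=
  ⟨fun ⟨h0, _, hown, hH, hdev, htail⟩ => ⟨h0, fun n hn => ⟨hown n hn, hH n hn, hdev n hn⟩, htail⟩,
    fun ⟨h0, hb, htail⟩ => ⟨h0, fun n hn => (hb n hn).lt, fun n hn => (hb n hn).1,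
      fun n hn => (hb n hn).2.1, fun n hn => (hb n hn).2.2, htail⟩⟩

lemma infDecomp_iff : G.InfDecomp Pr i H h' ρ' cut ↔
    cut 0 = h'.length ∧ ∀ n, G.IsBlock Pr i H (prepend h' ρ') (cut n) (cut (n + 1)) :=
  ⟨fun ⟨h0, _, hown, hH, hdev⟩ => ⟨h0, fun n => ⟨hown n, hH n, hdev n⟩⟩,
    fun ⟨h0, hb⟩ => ⟨h0, strictMono_nat_of_lt_succ fun n => (hb n).lt, fun n => (hb n).1,
      fun n => (hb n).2.1, fun n => (hb n).2.2⟩⟩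

lemma FinDecomp.mono
    (hsub : ∀ n, Pr (playPrefix (prepend h' ρ') n) (prepend h' ρ' n) ⊆
      Pr' (playPrefix (prepend h' ρ') n) (prepend h' ρ' n))
    (hdec : G.FinDecomp Pr i H h' ρ' k cut) : G.FinDecomp Pr' i H h' ρ' k cut := by
  obtain ⟨h0, hb, htail⟩ := finDecomp_iff.1 hdec
  exact finDecomp_iff.2 ⟨h0, fun n hn => (hb n hn).mono (hsub _), hsub _ htail⟩

lemma InfDecomp.mono
    (hsub : ∀ n, Pr (playPrefix (prepend h' ρ') n) (prepend h' ρ' n) ⊆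
      Pr' (playPrefix (prepend h' ρ') n) (prepend h' ρ' n))
    (hdec : G.InfDecomp Pr i H h' ρ' cut) : G.InfDecomp Pr' i H h' ρ' cut := by
  obtain ⟨h0, hb⟩ := infDecomp_iff.1 hdec
  exact infDecomp_iff.2 ⟨h0, fun n => (hb n).mono (hsub _)⟩

lemma FinDecomp.snoc (hdec : G.FinDecomp Pr i H h' ρ' k cut) (hq : cut k ≤ q)
    (hagree : ∀ m ≤ q, prepend h' ρ'' m = prepend h' ρ' m)
    (hne : prepend h' ρ'' (q + 1) ≠ prepend h' ρ' (q + 1))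
    (hown : G.owner (prepend h' ρ' q) = i)
    (hH : (playPrefix (prepend h' ρ') (q + 1), prepend h' ρ'' (q + 1)) ∈ H)
    (htail : (fun m => prepend h' ρ'' (q + 1 + m)) ∈
      Pr (playPrefix (prepend h' ρ'') (q + 1)) (prepend h' ρ'' (q + 1))) :
    G.FinDecomp Pr i H h' ρ'' (k + 1) (Function.update cut (k + 1) (q + 1)) := by
  obtain ⟨h0, hb, hshift⟩ := finDecomp_iff.1 hdec
  refine finDecomp_iff.2 ⟨by simpa using h0, fun n hn => ?_, by simpa using htail⟩
  rcases Nat.lt_succ_iff_lt_or_eq.1 hn with hn | rfl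
  · have hle : cut (n + 1) ≤ q :=
      (le_of_forall_lt_succ (fun j hj => (hb j hj).lt) hn).trans hq
    rw [Function.update_of_ne (by omega), Function.update_of_ne (by omega)]
    exact (hb n hn).congr fun m hm => (hagree m (hm.trans hle)).symm
  · rw [Function.update_self, Function.update_of_ne (Nat.succ_ne_self n).symm]
    refine ⟨by simpa [hagree q le_rfl] using hown, ?_,
      devStepAt_succ_of_shift_mem hq hshift hagree hne⟩
    rwa [playPrefix_congr fun m hm => hagree m (by omega)]

lemma Dset_empty_subset {v' : V} : G.Dset Pr ∅ i h' v' ⊆ Pr h' v' := by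
  rintro ρ' ⟨h0, -, ⟨cut, hinf⟩ | ⟨k, cut, hfin, -⟩⟩
  · exact ((infDecomp_iff.1 hinf).2 0).2.1.elim
  obtain ⟨hcut0, hb, htail⟩ := finDecomp_iff.1 hfin
  cases k with
  | zero => simpa [hcut0, shift_prepend, h0] using htail
  | succ k => exact (hb 0 k.succ_pos).2.1.elim

lemma exists_branch_of_notMem_Dset {v0 v' : V} (hh' : G.IsHist v0 h' v') (hρ'0 : ρ' 0 = v')
    (hρ' : G.IsPlay ρ') (hdec : G.FinDecomp Pr i H h' ρ' k cut)
    (hD : ρ' ∉ G.Dset Pr H i h' v') :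
    ∃ q u, cut k ≤ q ∧ G.owner (prepend h' ρ' q) = i ∧ G.E (prepend h' ρ' q) u ∧
      u ≠ prepend h' ρ' (q + 1) ∧ (playPrefix (prepend h' ρ') (q + 1), u) ∈ H := by
  obtain ⟨ρ'', cut', h''0, h'', hdec'', hcut, hagree, hne⟩ : ∃ (ρ'' : ℕ → V) (cut' : ℕ → ℕ),
      ρ'' 0 = v' ∧ G.IsPlay ρ'' ∧
      (G.InfDecomp Pr i H h' ρ'' cut' ∨ ∃ m', k < m' ∧ G.FinDecomp Pr i H h' ρ'' m' cut') ∧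
      (∀ n ≤ k, cut' n = cut n) ∧
      (∀ m < cut' (k + 1), prepend h' ρ'' m = prepend h' ρ' m) ∧
      prepend h' ρ'' (cut' (k + 1)) ≠ prepend h' ρ' (cut' (k + 1)) := by
    by_contra hmax
    exact hD ⟨hρ'0, hρ', Or.inr ⟨k, cut, hdec, hmax⟩⟩
  have hblock : G.IsBlock Pr i H (prepend h' ρ'') (cut' k) (cut' (k + 1)) := by
    rcases hdec'' with hinf | ⟨m', hkm, hfin⟩
    · exact (infDecomp_iff.1 hinf).2 k
    · exact (finDecomp_iff.1 hfin).2.1 k hkm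
  obtain ⟨hown, hH, hlt, -⟩ := hblock
  obtain ⟨q, hq⟩ : ∃ q, cut' (k + 1) = q + 1 := ⟨_, (Nat.succ_pred_eq_of_pos (by omega)).symm⟩
  rw [hq] at hagree hne hown hH hlt
  have hq_eq := hagree q (by omega)
  refine ⟨q, prepend h' ρ'' (q + 1), by rw [← hcut k le_rfl]; omega,
    by simpa [hq_eq] using hown, ?_, hne, ?_⟩
  · simpa [hq_eq] using G.isPlay_prepend hh' h'' h''0 q
  · rwa [playPrefix_congr hagree] at hH

lemma infDecomp_of_forall_finDecomp {ρs : ℕ → ℕ → V} {cuts : ℕ → ℕ → ℕ}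
    (hdec : ∀ k, G.FinDecomp Pr i H h' (ρs k) k (cuts k))
    (hcuts : ∀ k, ∀ j ≤ k, cuts (k + 1) j = cuts k j)
    (hρs : ∀ k, ∀ m < cuts (k + 1) (k + 1), prepend h' (ρs (k + 1)) m = prepend h' (ρs k) m) :
    G.InfDecomp Pr i H h' (fun m => ρs (h'.length + m) m) (fun k => cuts k k) ∧
      Converges (fun k => prepend h' (ρs k)) (prepend h' fun m => ρs (h'.length + m) m) := by
  have hcut_eq : ∀ k j, j ≤ k → cuts k j = cuts j j := fun k j hjk =>
    eq_of_forall_eq_succ_below (N := (· + 1)) (fun _ _ h => Nat.add_le_add_right h 1)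
      (fun k m hm => hcuts k m (by omega)) hjk (by omega)
  have hblock : ∀ k, G.IsBlock Pr i H (prepend h' (ρs (k + 1))) (cuts k k)
      (cuts (k + 1) (k + 1)) := fun k => by
    simpa [hcut_eq (k + 1) k (by omega)] using (finDecomp_iff.1 (hdec (k + 1))).2.1 k (by omega)
  have hmono : StrictMono fun k => cuts k k := strictMono_nat_of_lt_succ fun k => (hblock k).lt
  have hN : Monotone fun k => cuts (k + 1) (k + 1) := fun a b h => hmono.monotone (by omega)
  have hid : ∀ k, k < cuts (k + 1) (k + 1) := fun k => hmono.id_le (k + 1)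
  rw [infDecomp_iff, prepend_diag]
  refine ⟨⟨(finDecomp_iff.1 (hdec 0)).1, fun k => (hblock k).congr fun m hm => ?_⟩,
    converges_diag hN hid hρs⟩
  exact (diag_eq_of_forall_eq_succ_below (ws := fun k => prepend h' (ρs k)) (k := k + 1) hN hid
    hρs (hm.trans_lt (hmono (Nat.lt_succ_self _)))).symm

end Decompositions

section Stability

variable {G : QGame P V} {v0 v' : V} {S Pr : List V → V → Set (ℕ → V)} {i : P}
  {H : Set (List V × V)} {h' : List V} {c : EReal}

lemma exists_cost_ge_of_notMem_Eset {w : ℕ → V} {p q : ℕ} {u : V}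
    (hshift : (fun m => w (p + m)) ∉ G.Eset S (playPrefix w p)) (hpq : p ≤ q)
    (he : G.E (w q) u) (hu : u ≠ w (q + 1)) :
    ∃ τ ∈ S (playPrefix w (q + 1)) u,
      G.cost (G.owner (w q)) w ≤ G.cost (G.owner (w q)) (prepend (playPrefix w (q + 1)) τ) := by
  obtain ⟨r, rfl⟩ : ∃ r, q = p + r := ⟨q - p, by omega⟩
  by_contra hcon
  push Not at hcon
  refine hshift ⟨r, u, he, hu, fun τ hτ => ?_⟩
  rw [playPrefix_append_playPrefix_shift, ← Nat.add_assoc] at hτ ⊢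
  rw [prepend_playPrefix_shift]
  exact hcon τ hτ

def CostlyFinDecomp (G : QGame P V) (S : List V → V → Set (ℕ → V)) (i : P)
    (H : Set (List V × V)) (h' : List V) (v' : V) (c : EReal) (k : ℕ) (ρ' : ℕ → V)
    (cut : ℕ → ℕ) : Prop :=
  ρ' 0 = v' ∧ G.IsPlay ρ' ∧ G.FinDecomp S i H h' ρ' k cut ∧ c ≤ G.cost i (prepend h' ρ')

lemma exists_costlyFinDecomp_succ (hh' : G.IsHist v0 h' v')
    (hS : ∀ g u, S g u ⊆ {ρ | G.IsPlay ρ ∧ ρ 0 = u})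
    (hstable : ∀ g u, G.IsHist v0 g u → ∀ τ ∈ S g u, τ ∉ G.Eset S g)
    (hSPr : ∀ g u, G.IsHist v0 g u → S g u ⊆ Pr g u)
    (hall : ∀ ρ' ∈ G.Dset Pr H i h' v', G.cost i (prepend h' ρ') < c)
    {k : ℕ} {ρ' : ℕ → V} {cut : ℕ → ℕ} (hρ' : G.CostlyFinDecomp S i H h' v' c k ρ' cut) :
    ∃ ρ'' cut', G.CostlyFinDecomp S i H h' v' c (k + 1) ρ'' cut' ∧ (∀ j ≤ k, cut' j = cut j) ∧
      ∀ m < cut' (k + 1), prepend h' ρ'' m = prepend h' ρ' m := by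
  obtain ⟨h0, hplay, hdec, hcost⟩ := hρ'
  set w := prepend h' ρ'
  have hw := G.isPlay_prepend hh' hplay h0
  have hw0 := G.prepend_zero hh' h0
  have hhist := G.isHist_playPrefix hw hw0
  have hD : ρ' ∉ G.Dset Pr H i h' v' := fun hmem => (hall _ hmem).not_ge hcost
  obtain ⟨q, u, hq, hown, he, hu, hH⟩ :=
    exists_branch_of_notMem_Dset hh' h0 hplay (hdec.mono fun n => hSPr _ _ (hhist n)) hD
  obtain ⟨hcut0, hblocks, hshift⟩ := finDecomp_iff.1 hdec
  obtain ⟨τ, hτ, hτcost⟩ := exists_cost_ge_of_notMem_Eset (hstable _ _ (hhist _) _ hshift) hq he hu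
  rw [hown] at hτcost
  obtain ⟨hτplay, hτ0⟩ := hS _ _ hτ
  set w' := prepend (playPrefix w (q + 1)) τ
  have hlen : h'.length ≤ q :=
    hcut0 ▸ (le_of_forall_lt_succ (fun j hj => (hblocks j hj).lt) k.zero_le).trans hq
  have hw'w : ∀ m ≤ q, w' m = w m := fun m hm => prepend_playPrefix_of_lt w τ (by omega)
  have hprep : prepend h' (fun m => w' (h'.length + m)) = w' := by
    refine prepend_shift ((playPrefix_congr fun m hm => hw'w m (by omega)).trans ?_)
    exact playPrefix_prepend h' ρ'
  refine ⟨fun m => w' (h'.length + m), Function.update cut (k + 1) (q + 1), ⟨?_, ?_, ?_, ?_⟩,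
    fun j hj => Function.update_of_ne (by omega) _ _, fun m hm => ?_⟩
  · simpa [hw'w _ hlen, w] using h0
  · exact G.isPlay_shift (G.isPlay_prepend (G.isHist_playPrefix_of_edge hw hw0 q he) hτplay hτ0) _
  · refine hdec.snoc hq (by rwa [hprep]) (by simpa [hprep, w', hτ0] using hu) hown
      (by simpa [hprep, w', hτ0] using hH) ?_
    simpa [hprep, w', hτ0, shift_prepend_playPrefix] using hτ
  · rw [hprep]
    exact hcost.trans hτcost
  · rw [hprep]
    exact hw'w m (by simpa using hm)

theorem exists_mem_Dset_cost_ge (husc : G.USCcost (G.cost i)) (hh' : G.IsHist v0 h' v')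
    (hS : ∀ g u, S g u ⊆ {ρ | G.IsPlay ρ ∧ ρ 0 = u})
    (hstable : ∀ g u, G.IsHist v0 g u → ∀ τ ∈ S g u, τ ∉ G.Eset S g)
    (hSPr : ∀ g u, G.IsHist v0 g u → S g u ⊆ Pr g u) {ρ₀ : ℕ → V} (hρ₀ : ρ₀ ∈ S h' v')
    (hc : c ≤ G.cost i (prepend h' ρ₀)) :
    ∃ ρ' ∈ G.Dset Pr H i h' v', c ≤ G.cost i (prepend h' ρ') := by
  by_contra hall
  push Not at hall
  obtain ⟨hρ₀play, hρ₀0⟩ := hS _ _ hρ₀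
  have hstart : G.CostlyFinDecomp S i H h' v' c 0 ρ₀ fun _ => h'.length :=
    ⟨hρ₀0, hρ₀play, finDecomp_iff.2 ⟨rfl, by simp, by simpa [shift_prepend, hρ₀0] using hρ₀⟩, hc⟩
  obtain ⟨f, hf⟩ := exists_seq_of_exists_succ (X := (ℕ → V) × (ℕ → ℕ))
    (Q := fun k x => G.CostlyFinDecomp S i H h' v' c k x.1 x.2)
    (R := fun k x y => (∀ j ≤ k, y.2 j = x.2 j) ∧
      ∀ m < y.2 (k + 1), prepend h' y.1 m = prepend h' x.1 m)
    ⟨(ρ₀, fun _ => h'.length), hstart⟩ fun k x hx => by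
      obtain ⟨ρ'', cut', h⟩ := exists_costlyFinDecomp_succ hh' hS hstable hSPr hall hx
      exact ⟨(ρ'', cut'), h⟩
  obtain ⟨hinf, hconv⟩ := infDecomp_of_forall_finDecomp (fun k => (hf k).1.2.2.1)
    (fun k => (hf k).2.1) (fun k => (hf k).2.2)
  set ρ := fun m => (f (h'.length + m)).1 m
  have hρ0 : ρ 0 = v' := (hf _).1.1
  have hplays : ∀ k, G.IsPlay (prepend h' (f k).1) :=
    fun k => G.isPlay_prepend hh' (hf k).1.2.1 (hf k).1.1
  have hlim : G.IsPlay (prepend h' ρ) := G.isPlay_of_converges hplays hconv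
  have hhist := G.isHist_playPrefix hlim (G.prepend_zero hh' hρ0)
  have hmem : ρ ∈ G.Dset Pr H i h' v' :=
    ⟨hρ0, by simpa [shift_prepend] using G.isPlay_shift hlim h'.length,
      Or.inl ⟨_, hinf.mono fun n => hSPr _ _ (hhist n)⟩⟩
  have hcost : c ≤ G.cost i (prepend h' ρ) :=
    (Filter.le_limsup_of_frequently_le (Filter.Frequently.of_forall fun k => (hf k).1.2.2.2)).trans
      (husc _ _ hplays hlim hconv)
  exact (hall ρ hmem).not_ge hcost

theorem notMem_E'set_of_subset (husc : ∀ i, G.USCcost (G.cost i))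
    (hS : ∀ g u, S g u ⊆ {ρ | G.IsPlay ρ ∧ ρ 0 = u})
    (hstable : ∀ g u, G.IsHist v0 g u → ∀ τ ∈ S g u, τ ∉ G.Eset S g)
    (hSPr : ∀ g u, G.IsHist v0 g u → S g u ⊆ Pr g u) {h : List V} {v : V}
    (hist : G.IsHist v0 h v) {ρ : ℕ → V} (hρ : ρ ∈ S h v) : ρ ∉ G.E'set Pr h := by
  rintro ⟨n, v', H, he, hne, -, hall⟩
  obtain ⟨hρplay, hρ0⟩ := hS _ _ hρ
  obtain ⟨ρ₀, hρ₀, hc⟩ : ∃ ρ₀ ∈ S (h ++ playPrefix ρ (n + 1)) v',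
      G.cost (G.owner (ρ n)) (prepend h ρ) ≤
        G.cost (G.owner (ρ n)) (prepend (h ++ playPrefix ρ (n + 1)) ρ₀) := by
    by_contra hcon
    push Not at hcon
    exact hstable h v hist ρ hρ ⟨n, v', he, hne, hcon⟩
  obtain ⟨ρ', hρ', hge⟩ := exists_mem_Dset_cost_ge (husc _)
    (G.isHist_append_playPrefix hist hρplay hρ0 he) hS hstable hSPr hρ₀ hc
  exact (hall ρ' hρ').not_ge hge

theorem notMem_Eset_of_notMem_E'set (hSPr : ∀ g u, G.IsHist v0 g u → S g u ⊆ Pr g u)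
    {h : List V} {v : V} (hist : G.IsHist v0 h v) {ρ : ℕ → V} (hρ : G.IsPlay ρ) (hρ0 : ρ 0 = v)
    (hE' : ρ ∉ G.E'set S h) : ρ ∉ G.Eset Pr h := by
  rintro ⟨n, v', he, hne, hall⟩
  refine hE' ⟨n, v', ∅, he, hne, Set.empty_subset _, fun ρ' hρ' => hall ρ' (hSPr _ _ ?_ ?_)⟩
  · exact G.isHist_append_playPrefix hist hρ hρ0 he
  · exact Dset_empty_subset hρ'

end Stability

theorem P'set_subset_Pset {G : QGame P V} {v0 : V} {β : Ordinal}
    (hβ : ∀ h v, G.IsHist v0 h v → G.P'set β h v = G.P'set (β + 1) h v) (γ : Ordinal) :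
    ∀ h v, G.IsHist v0 h v → G.P'set β h v ⊆ G.Pset γ h v := by
  rw [Pset_eq_hierarchy, P'set_eq_hierarchy] at *
  refine subset_hierarchy (fun h v _ => hierarchy_subset_init β h v)
    (fun Pr hPr h v hist ρ hρ => ?_) γ
  obtain ⟨hρplay, hρ0⟩ := hierarchy_subset_init β h v hρ
  exact notMem_Eset_of_notMem_E'set hPr hist hρplay hρ0
    (notMem_of_hierarchy_eq_add_one (hβ h v hist) hρ)

theorem Pset_subset_P'set {G : QGame P V} {v0 : V} {α : Ordinal}
    (husc : ∀ i, G.USCcost (G.cost i))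
    (hα : ∀ h v, G.IsHist v0 h v → G.Pset α h v = G.Pset (α + 1) h v) (γ : Ordinal) :
    ∀ h v, G.IsHist v0 h v → G.Pset α h v ⊆ G.P'set γ h v := by
  rw [Pset_eq_hierarchy, P'set_eq_hierarchy] at *
  exact subset_hierarchy (fun h v _ => hierarchy_subset_init α h v)
    (fun _ hPr _ _ hist _ hρ => notMem_E'set_of_subset husc (hierarchy_subset_init α)
      (fun g u hg _ => notMem_of_hierarchy_eq_add_one (hα g u hg)) hPr hist hρ) γ

end QGame

open QGame in
theorem P'set_fixpoint_eq_Pset_fixpoint_general {P V : Type}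
    (G : QGame P V) (v0 : V)
    (husc : ∀ i, G.USCcost (G.cost i))
    (αstar βstar : Ordinal)
    (hα : ∀ h v, G.IsHist v0 h v → G.Pset αstar h v = G.Pset (αstar + 1) h v)
    (hβ : ∀ h v, G.IsHist v0 h v → G.P'set βstar h v = G.P'set (βstar + 1) h v) :
    ∀ h v, G.IsHist v0 h v → G.P'set βstar h v = G.Pset αstar h v := fun h v hist =>
  (P'set_subset_Pset hβ αstar h v hist).antisymm (Pset_subset_P'set husc hα βstar h v hist)

open QGame in
/-- For upper-semicontinuous cost functions the two
transfinite hierarchies coincide at their fixpoints: if `α*` is a fixpoint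
of the weak-SPE hierarchy `P` and `β*` a fixpoint of the SPE hierarchy `P'`,
then `P'_{β*}(hv) = P_{α*}(hv)` for every history `hv` of `(G, v0)`. -/
theorem P'set_fixpoint_eq_Pset_fixpoint {P V : Type} [Finite P] [Finite V]
    (G : QGame P V) (v0 : V)
    (husc : ∀ i, G.USCcost (G.cost i))
    (αstar βstar : Ordinal)
    (hα : ∀ h v, G.IsHist v0 h v → G.Pset αstar h v = G.Pset (αstar + 1) h v)
    (hβ : ∀ h v, G.IsHist v0 h v → G.P'set βstar h v = G.P'set (βstar + 1) h v) :
    ∀ h v, G.IsHist v0 h v → G.P'set βstar h v = G.Pset αstar h v :=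
  P'set_fixpoint_eq_Pset_fixpoint_general G v0 husc αstar βstar hα hβ
end
end
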